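/- Let R be a commutative ring, let S, T : R → R be ring homomorphisms, and let U, V, u, v, ξ, η ∈ R with S(η) = η, T(ξ) = ξ. Define G = 1 + ξ·S(U)·V and g = 1 + η·T(u)·v. Assume the mixed DNLS relations: (i) g·T(U) − U = η·T(u); (ii) g·V − T(V) = η·v; (iii) G·S(u) − u = ξ·S(U); (iv) G·v − S(v) = ξ·V. Then, setting f = T(V) − g·V, one has S(f) − G·f = ξ·η·V. -/

import Mathlib

theorem mixed_second_order_general {R : Type*} [CommRing R]
    (S T : R →+* R) (U V u v ξ η : R)
    (hSη : S η = η)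
    (hii : (1 + η * T u * v) * V - T V = η * v)
    (hiv : (1 + ξ * S U * V) * v - S v = ξ * V) :
    S (T V - (1 + η * T u * v) * V) -
      (1 + ξ * S U * V) * (T V - (1 + η * T u * v) * V) = ξ * η * V := by
  have hf : T V - (1 + η * T u * v) * V = -(η * v) := by linear_combination -hii
  rw [hf, map_neg, map_mul, hSη]
  linear_combination η * hiv

/-- From the mixed DNLS relations, with `f = T(V) - g·V`, one has
`S(f) - G·f = ξη·V`. -/
theorem mixed_second_order {R : Type*} [CommRing R]
    (S T : R →+* R) (U V u v ξ η : R)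
    (hSη : S η = η) (hTξ : T ξ = ξ)
    (hi : (1 + η * T u * v) * T U - U = η * T u)
    (hii : (1 + η * T u * v) * V - T V = η * v)
    (hiii : (1 + ξ * S U * V) * S u - u = ξ * S U)
    (hiv : (1 + ξ * S U * V) * v - S v = ξ * V) :
    S (T V - (1 + η * T u * v) * V) -
      (1 + ξ * S U * V) * (T V - (1 + η * T u * v) * V) = ξ * η * V :=
  mixed_second_order_general S T U V u v ξ η hSη hii hiv
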